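/- Let f : [0,∞) → [0,∞) be a bounded and continuous probability density with finite mean 1/β > 0, and let r(t) = Σ_{k=1}^∞ f^{*k}(t) be the associated renewal density. If f is bounded by M, then r is well-defined, bounded, and continuous on [0,∞). -/

import Mathlib

open MeasureTheory Set Filter

/-- `convPow f k` is the `(k+1)`-fold convolution power `f^{*(k+1)}` of `f`
(so `convPow f 0 = f = f^{*1}`). -/
noncomputable def convPow (f : ℝ → ℝ) : ℕ → ℝ → ℝ
  | 0 => f
  | (k + 1) => fun t => ∫ s : ℝ, f s * convPow f k (t - s)

noncomputable section

namespace Stmt17Aux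

/-- `ℝ≥0∞`-valued convolution powers. -/
def eF (f : ℝ → ℝ) : ℕ → ℝ → ENNReal
  | 0 => fun x => ENNReal.ofReal (f x)
  | (k+1) => fun t => ∫⁻ s : ℝ, ENNReal.ofReal (f s) * eF f k (t - s)

variable {f : ℝ → ℝ} {M : ℝ}

lemma eF_measurable (hf : Measurable f) : ∀ k, Measurable (eF f k)
  | 0 => hf.ennreal_ofReal
  | (k+1) => by
      have h1 : Measurable fun p : ℝ × ℝ => ENNReal.ofReal (f p.2) * eF f k (p.1 - p.2) :=
        ((hf.comp measurable_snd).ennreal_ofReal).mul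
          ((eF_measurable hf k).comp (measurable_fst.sub measurable_snd))
      exact h1.lintegral_prod_right'

lemma eF_neg (hneg : ∀ x < (0:ℝ), f x = 0) :
    ∀ k, ∀ t, t < (0:ℝ) → eF f k t = 0
  | 0, t, ht => by simp [eF, hneg t ht]
  | (k+1), t, ht => by
      have h : ∀ s : ℝ, ENNReal.ofReal (f s) * eF f k (t - s) = 0 := by
        intro s
        rcases lt_or_ge s 0 with h | h
        · simp [hneg s h]
        · have h2 : t - s < 0 := by linarith
          simp [eF_neg hneg k _ h2]
      simp [eF, h]

lemma eF_le (h0 : ∀ x, 0 ≤ f x) (hneg : ∀ x < (0:ℝ), f x = 0) (hM : ∀ x, f x ≤ M) :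
    ∀ k t, eF f k t ≤ ENNReal.ofReal (M^(k+1) * (max t 0)^k / (k.factorial)) := by
  have hM0 : (0:ℝ) ≤ M := (h0 0).trans (hM 0)
  intro k
  induction k with
  | zero =>
    intro t
    simpa [eF] using ENNReal.ofReal_le_ofReal (hM t)
  | succ k ih =>
    intro t
    rcases lt_or_ge t 0 with ht | ht
    · rw [eF_neg hneg _ _ ht]; exact zero_le
    have hmax : max t 0 = t := max_eq_left ht
    rw [hmax]
    have hC0 : (0:ℝ) ≤ M^(k+1) / (k.factorial) := by positivity
    -- pointwise bound by an indicator
    have hpt : ∀ s : ℝ, ENNReal.ofReal (f s) * eF f k (t - s) ≤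
        (Icc 0 t).indicator
          (fun s => ENNReal.ofReal (M * (M^(k+1) * (t-s)^k / (k.factorial)))) s := by
      intro s
      rcases lt_or_ge s 0 with hs | hs
      · simp [hneg s hs]
      rcases le_or_gt s t with hst | hst
      · rw [indicator_of_mem (mem_Icc.2 ⟨hs, hst⟩)]
        have h1 : ENNReal.ofReal (f s) ≤ ENNReal.ofReal M := ENNReal.ofReal_le_ofReal (hM s)
        have h2 : eF f k (t - s) ≤ ENNReal.ofReal (M^(k+1) * (t-s)^k / (k.factorial)) := by
          have := ih (t - s)
          rwa [max_eq_left (by linarith : (0:ℝ) ≤ t - s)] at this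
        calc ENNReal.ofReal (f s) * eF f k (t - s)
            ≤ ENNReal.ofReal M * ENNReal.ofReal (M^(k+1) * (t-s)^k / (k.factorial)) :=
              mul_le_mul' h1 h2
          _ = ENNReal.ofReal (M * (M^(k+1) * (t-s)^k / (k.factorial))) :=
              (ENNReal.ofReal_mul hM0).symm
      · have h2 : t - s < 0 := by linarith
        simp [eF_neg hneg k _ h2]
    have hcont : Continuous fun s : ℝ => M * (M^(k+1) * (t-s)^k / (k.factorial)) := by
      continuity
    have hInt : IntegrableOn (fun s : ℝ => M * (M^(k+1) * (t-s)^k / (k.factorial)))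
        (Icc 0 t) volume := hcont.integrableOn_Icc
    have hval : ∫ s in Icc 0 t, M * (M^(k+1) * (t-s)^k / (k.factorial)) =
        M^(k+1+1) * t^(k+1) / ((k+1).factorial) := by
      rw [integral_Icc_eq_integral_Ioc, ← intervalIntegral.integral_of_le ht]
      have h3 : ∫ s in (0:ℝ)..t, M * (M^(k+1) * (t-s)^k / (k.factorial)) =
          (M * (M^(k+1) / (k.factorial))) * ∫ s in (0:ℝ)..t, (t-s)^k := by
        rw [← intervalIntegral.integral_const_mul]
        congr 1; funext s; ring
      rw [h3]
      have h4 : ∫ s in (0:ℝ)..t, (t-s)^k = t^(k+1) / (k+1) := by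
        have := intervalIntegral.integral_comp_sub_left (fun x : ℝ => x^k) t (a := 0) (b := t)
        rw [this]
        simp [integral_pow]
      rw [h4, Nat.factorial_succ]
      have hk : (k.factorial : ℝ) ≠ 0 := by positivity
      have hk1 : ((k:ℝ)+1) ≠ 0 := by positivity
      push_cast
      field_simp
      ring
    calc eF f (k+1) t = ∫⁻ s : ℝ, ENNReal.ofReal (f s) * eF f k (t - s) := rfl
      _ ≤ ∫⁻ s : ℝ, (Icc 0 t).indicator
            (fun s => ENNReal.ofReal (M * (M^(k+1) * (t-s)^k / (k.factorial)))) s :=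
          lintegral_mono hpt
      _ = ∫⁻ s in Icc 0 t, ENNReal.ofReal (M * (M^(k+1) * (t-s)^k / (k.factorial))) :=
          lintegral_indicator measurableSet_Icc _
      _ = ENNReal.ofReal (∫ s in Icc 0 t, M * (M^(k+1) * (t-s)^k / (k.factorial))) := by
          rw [ofReal_integral_eq_lintegral_ofReal hInt]
          exact (ae_restrict_iff' measurableSet_Icc).2 (Eventually.of_forall
            (fun s hs => by
              have : (0:ℝ) ≤ t - s := by linarith [hs.2]
              positivity))
      _ = ENNReal.ofReal (M^(k+1+1) * t^(k+1) / ((k+1).factorial)) := by rw [hval]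

lemma eF_ne_top (h0 : ∀ x, 0 ≤ f x) (hneg : ∀ x < (0:ℝ), f x = 0) (hM : ∀ x, f x ≤ M)
    (k : ℕ) (t : ℝ) : eF f k t ≠ ⊤ :=
  ((eF_le h0 hneg hM k t).trans_lt ENNReal.ofReal_lt_top).ne

section Chunk2
variable {f : ℝ → ℝ} {M : ℝ}

lemma lintegral_shift (g : ℝ → ENNReal) (s : ℝ) : ∫⁻ u : ℝ, g (u - s) = ∫⁻ u, g u := by
  simpa [sub_eq_add_neg] using lintegral_add_right_eq_self g (-s)

lemma setLIntegral_shift (g : ℝ → ENNReal) (s : ℝ) {S T : Set ℝ}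
    (hS : MeasurableSet S) (hT : MeasurableSet T) (hST : ∀ y : ℝ, y - s ∈ T ↔ y ∈ S) :
    ∫⁻ u in S, g (u - s) = ∫⁻ y in T, g y := by
  have h1 : ∀ u : ℝ, S.indicator (fun u => g (u - s)) u = T.indicator g (u - s) := by
    intro u
    by_cases h : u ∈ S
    · rw [indicator_of_mem h, indicator_of_mem ((hST u).2 h)]
    · rw [indicator_of_notMem h, indicator_of_notMem (fun hc => h ((hST u).1 hc))]
  rw [← lintegral_indicator hS, ← lintegral_indicator hT, lintegral_congr h1,
    lintegral_shift (T.indicator g) s]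

lemma eF_int (hf : Measurable f) (hl1 : ∫⁻ x, ENNReal.ofReal (f x) = 1) :
    ∀ k, ∫⁻ t, eF f k t = 1 := by
  intro k
  induction k with
  | zero => exact hl1
  | succ k ih =>
    have hmeas : Measurable (Function.uncurry
        (fun t s : ℝ => ENNReal.ofReal (f s) * eF f k (t - s))) :=
      ((hf.comp measurable_snd).ennreal_ofReal).mul
        ((eF_measurable hf k).comp (measurable_fst.sub measurable_snd))
    calc ∫⁻ t, eF f (k+1) t
        = ∫⁻ t, ∫⁻ s, ENNReal.ofReal (f s) * eF f k (t - s) := rfl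
      _ = ∫⁻ s, ∫⁻ t, ENNReal.ofReal (f s) * eF f k (t - s) :=
          lintegral_lintegral_swap hmeas.aemeasurable
      _ = ∫⁻ s, ENNReal.ofReal (f s) * ∫⁻ t, eF f k (t - s) := by
          refine lintegral_congr fun s => ?_
          exact lintegral_const_mul _ ((eF_measurable hf k).comp (measurable_id.sub measurable_const))
      _ = ∫⁻ s, ENNReal.ofReal (f s) * 1 := by
          refine lintegral_congr fun s => ?_
          rw [lintegral_shift (eF f k) s, ih]
      _ = 1 := by simpa using hl1

lemma convF (hf : Measurable f) : ∀ m n (t : ℝ),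
    eF f (m+n+1) t = ∫⁻ s, eF f m s * eF f n (t - s) := by
  intro m
  induction m with
  | zero =>
    intro n t
    have h : 0 + n + 1 = n + 1 := by omega
    rw [h]; rfl
  | succ m ih =>
    intro n t
    have h : m + 1 + n + 1 = (m + n + 1) + 1 := by omega
    rw [h]
    have hmeas : Measurable (Function.uncurry
        (fun s u : ℝ => ENNReal.ofReal (f s) * (eF f m (u - s) * eF f n (t - u)))) :=
      ((hf.comp measurable_fst).ennreal_ofReal).mul
        (((eF_measurable hf m).comp (measurable_snd.sub measurable_fst)).mul
          ((eF_measurable hf n).comp (measurable_const.sub measurable_snd)))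
    calc eF f ((m+n+1)+1) t
        = ∫⁻ s, ENNReal.ofReal (f s) * eF f (m+n+1) (t - s) := rfl
      _ = ∫⁻ s, ENNReal.ofReal (f s) * ∫⁻ u, eF f m (u - s) * eF f n (t - u) := by
          refine lintegral_congr fun s => ?_
          rw [ih n (t - s)]
          congr 1
          have h2 : ∀ u : ℝ, eF f m u * eF f n (t - s - u) =
              (fun u => eF f m (u - s) * eF f n (t - u)) (u + s) := by
            intro u
            simp only []
            rw [add_sub_cancel_right]
            congr 2
            ring
          rw [lintegral_congr h2]
          exact lintegral_add_right_eq_self (fun u => eF f m (u - s) * eF f n (t - u)) s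
      _ = ∫⁻ s, ∫⁻ u, ENNReal.ofReal (f s) * (eF f m (u - s) * eF f n (t - u)) := by
          refine lintegral_congr fun s => ?_
          exact (lintegral_const_mul _ (((eF_measurable hf m).comp
            (measurable_id.sub measurable_const)).mul
            ((eF_measurable hf n).comp (measurable_const.sub measurable_id)))).symm
      _ = ∫⁻ u, ∫⁻ s, ENNReal.ofReal (f s) * (eF f m (u - s) * eF f n (t - u)) :=
          lintegral_lintegral_swap hmeas.aemeasurable
      _ = ∫⁻ u, (∫⁻ s, ENNReal.ofReal (f s) * eF f m (u - s)) * eF f n (t - u) := by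
          refine lintegral_congr fun u => ?_
          have h3 : ∀ s : ℝ, ENNReal.ofReal (f s) * (eF f m (u - s) * eF f n (t - u)) =
              (fun s => ENNReal.ofReal (f s) * eF f m (u - s)) s * eF f n (t - u) := by
            intro s; simp only []; ring
          rw [lintegral_congr h3]
          exact lintegral_mul_const _ ((hf.ennreal_ofReal).mul
            ((eF_measurable hf m).comp (measurable_const.sub measurable_id)))
      _ = ∫⁻ u, eF f (m+1) u * eF f n (t - u) := rfl

lemma convPow_eq (hf : Measurable f) (h0 : ∀ x, 0 ≤ f x) (hneg : ∀ x < (0:ℝ), f x = 0)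
    (hM : ∀ x, f x ≤ M) : ∀ k (t : ℝ), convPow f k t = (eF f k t).toReal := by
  intro k
  induction k with
  | zero => intro t; simp [convPow, eF, ENNReal.toReal_ofReal (h0 t)]
  | succ k ih =>
    intro t
    have hofReal : ∀ u, ENNReal.ofReal (convPow f k u) = eF f k u := fun u => by
      rw [ih]; exact ENNReal.ofReal_toReal (eF_ne_top h0 hneg hM k u)
    have hmk : Measurable (convPow f k) := by
      have h : convPow f k = fun u => (eF f k u).toReal := funext ih
      rw [h]; exact (eF_measurable hf k).ennreal_toReal
    have hnn : ∀ᵐ s : ℝ, 0 ≤ f s * convPow f k (t - s) := by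
      refine Eventually.of_forall fun s => mul_nonneg (h0 s) ?_
      rw [ih]; exact ENNReal.toReal_nonneg
    calc convPow f (k+1) t = ∫ s : ℝ, f s * convPow f k (t - s) := rfl
      _ = (∫⁻ s, ENNReal.ofReal (f s * convPow f k (t - s))).toReal :=
          integral_eq_lintegral_of_nonneg_ae hnn
            ((hf.mul (hmk.comp (measurable_const.sub measurable_id))).aestronglyMeasurable)
      _ = (∫⁻ s, ENNReal.ofReal (f s) * eF f k (t - s)).toReal := by
          congr 1
          refine lintegral_congr fun s => ?_
          rw [ENNReal.ofReal_mul (h0 s), hofReal]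
      _ = (eF f (k+1) t).toReal := rfl

lemma convPow_nonneg (hf : Measurable f) (h0 : ∀ x, 0 ≤ f x) (hneg : ∀ x < (0:ℝ), f x = 0)
    (hM : ∀ x, f x ≤ M) (k : ℕ) (t : ℝ) : 0 ≤ convPow f k t := by
  rw [convPow_eq hf h0 hneg hM]; exact ENNReal.toReal_nonneg

lemma convPow_le (hf : Measurable f) (h0 : ∀ x, 0 ≤ f x) (hneg : ∀ x < (0:ℝ), f x = 0)
    (hM : ∀ x, f x ≤ M) (k : ℕ) (t : ℝ) :
    convPow f k t ≤ M^(k+1) * (max t 0)^k / (k.factorial) := by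
  have hM0 : (0:ℝ) ≤ M := (h0 0).trans (hM 0)
  rw [convPow_eq hf h0 hneg hM]
  refine ENNReal.toReal_le_of_le_ofReal (by positivity) (eF_le h0 hneg hM k t)

end Chunk2
section Chunk3
variable {f : ℝ → ℝ} {M : ℝ}

/-- cdf of the `(k+1)`-fold convolution. -/
def cF (f : ℝ → ℝ) (k : ℕ) (a : ℝ) : ENNReal := ∫⁻ x in Iic a, eF f k x

/-- tail of `f`. -/
def tT (f : ℝ → ℝ) (a : ℝ) : ENNReal := ∫⁻ x in Ioi a, ENNReal.ofReal (f x)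

/-- first passage probabilities: `PP j a = P(S_j ≤ a < S_{j+1})`. -/
def PP (f : ℝ → ℝ) : ℕ → ℝ → ENNReal
  | 0 => fun a => tT f a
  | (j+1) => fun a => ∫⁻ x in Iic a, ENNReal.ofReal (f x) * PP f j (a - x)

/-- `GG m = P(S_m ≤ 1)`. -/
def GG (f : ℝ → ℝ) : ℕ → ENNReal
  | 0 => 1
  | (m+1) => cF f m 1

lemma measurable_setParam {g : ℝ → ℝ → ENNReal} (hg : Measurable (Function.uncurry g)) :
    Measurable (fun a => ∫⁻ x in Iic a, g a x) := by
  have h : (fun a => ∫⁻ x in Iic a, g a x) = fun a => ∫⁻ x,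
      ({p : ℝ × ℝ | p.2 ≤ p.1}.indicator (Function.uncurry g)) (a, x) := by
    funext a
    rw [← lintegral_indicator measurableSet_Iic]
    refine lintegral_congr fun x => ?_
    by_cases h : x ≤ a
    · simp [Set.indicator_apply, h, Function.uncurry_apply_pair]
    · simp [Set.indicator_apply, h, Function.uncurry_apply_pair]
  rw [h]
  exact (hg.indicator (measurableSet_le measurable_snd measurable_fst)).lintegral_prod_right'

lemma cF_measurable (hf : Measurable f) (k : ℕ) : Measurable (cF f k) :=
  measurable_setParam ((eF_measurable hf k).comp measurable_snd)

lemma tT_measurable (hf : Measurable f) : Measurable (tT f) := by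
  have h : tT f = fun a => ∫⁻ x,
      ({p : ℝ × ℝ | p.1 < p.2}.indicator (fun p => ENNReal.ofReal (f p.2))) (a, x) := by
    funext a
    rw [tT, ← lintegral_indicator measurableSet_Ioi]
    refine lintegral_congr fun x => ?_
    by_cases h : a < x
    · simp [Set.indicator_apply, h]
    · simp [Set.indicator_apply, h]
  rw [h]
  exact (((hf.comp measurable_snd).ennreal_ofReal).indicator
    (measurableSet_lt measurable_fst measurable_snd)).lintegral_prod_right'

lemma PP_measurable (hf : Measurable f) : ∀ j, Measurable (PP f j)
  | 0 => tT_measurable hf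
  | (j+1) => measurable_setParam
      (((hf.comp measurable_snd).ennreal_ofReal).mul
        ((PP_measurable hf j).comp (measurable_fst.sub measurable_snd)))

lemma tT_anti {a b : ℝ} (hab : a ≤ b) : tT f b ≤ tT f a :=
  lintegral_mono_set (Ioi_subset_Ioi hab)

lemma cF_add_tT (hl1 : ∫⁻ x, ENNReal.ofReal (f x) = 1) (a : ℝ) : cF f 0 a + tT f a = 1 := by
  have h := lintegral_add_compl (μ := volume) (fun x => ENNReal.ofReal (f x))
    (measurableSet_Iic (a := a))
  rw [compl_Iic] at h
  have h2 : cF f 0 a = ∫⁻ x in Iic a, ENNReal.ofReal (f x) := rfl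
  rw [h2, tT, h, hl1]

lemma cF_neg (hneg : ∀ x < (0:ℝ), f x = 0) (k : ℕ) {b : ℝ} (hb : b < 0) : cF f k b = 0 := by
  rw [cF]
  rw [setLIntegral_congr_fun measurableSet_Iic
    (fun x hx => eF_neg hneg k x (lt_of_le_of_lt hx hb))]
  simp

lemma cF_succ (hf : Measurable f) (hneg : ∀ x < (0:ℝ), f x = 0) (k : ℕ) (a : ℝ) :
    cF f (k+1) a = ∫⁻ x in Iic a, ENNReal.ofReal (f x) * cF f k (a - x) := by
  have hmeas : Measurable (Function.uncurry
      (fun t s : ℝ => ENNReal.ofReal (f s) * eF f k (t - s))) :=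
    ((hf.comp measurable_snd).ennreal_ofReal).mul
      ((eF_measurable hf k).comp (measurable_fst.sub measurable_snd))
  have key : ∀ s : ℝ, ∫⁻ t in Iic a, eF f k (t - s) = cF f k (a - s) := by
    intro s
    exact setLIntegral_shift (eF f k) s measurableSet_Iic measurableSet_Iic
      (fun y => by constructor <;> (intro h; simp only [mem_Iic] at *; linarith))
  have h1 : cF f (k+1) a = ∫⁻ s, ENNReal.ofReal (f s) * cF f k (a - s) := by
    calc cF f (k+1) a = ∫⁻ t in Iic a, ∫⁻ s, ENNReal.ofReal (f s) * eF f k (t - s) := rfl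
      _ = ∫⁻ s, ∫⁻ t in Iic a, ENNReal.ofReal (f s) * eF f k (t - s) :=
          lintegral_lintegral_swap hmeas.aemeasurable
      _ = ∫⁻ s, ENNReal.ofReal (f s) * ∫⁻ t in Iic a, eF f k (t - s) := by
          refine lintegral_congr fun s => ?_
          exact lintegral_const_mul _
            ((eF_measurable hf k).comp (measurable_id.sub measurable_const))
      _ = ∫⁻ s, ENNReal.ofReal (f s) * cF f k (a - s) := by
          refine lintegral_congr fun s => ?_
          rw [key s]
  rw [h1]
  have hsplit := lintegral_add_compl (μ := volume)
    (fun s => ENNReal.ofReal (f s) * cF f k (a - s)) (measurableSet_Iic (a := a))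
  rw [compl_Iic] at hsplit
  have hzero : ∫⁻ s in Ioi a, ENNReal.ofReal (f s) * cF f k (a - s) = 0 := by
    rw [setLIntegral_congr_fun measurableSet_Ioi (fun s hs => by
      rw [cF_neg hneg k (by simp only [mem_Ioi] at hs; linarith), mul_zero])]
    simp
  rw [← hsplit, hzero, add_zero]

lemma sumPP (hf : Measurable f) (hneg : ∀ x < (0:ℝ), f x = 0)
    (hl1 : ∫⁻ x, ENNReal.ofReal (f x) = 1) :
    ∀ J (a : ℝ), (∑ j ∈ Finset.range (J+1), PP f j a) + cF f J a = 1 := by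
  intro J
  induction J with
  | zero =>
    intro a
    have h : ∑ j ∈ Finset.range 1, PP f j a = tT f a := by simp [PP]
    rw [h, add_comm]
    exact cF_add_tT hl1 a
  | succ J ih =>
    intro a
    have hsum : ∑ j ∈ Finset.range (J+2), PP f j a =
        (∫⁻ x in Iic a, ENNReal.ofReal (f x) *
          ∑ j ∈ Finset.range (J+1), PP f j (a - x)) + PP f 0 a := by
      rw [Finset.sum_range_succ' (fun j => PP f j a) (J+1)]
      congr 1
      have h2 : ∀ j ∈ Finset.range (J+1), (fun x => ENNReal.ofReal (f x) * PP f j (a - x)) =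
          (fun x => ENNReal.ofReal (f x) * PP f j (a - x)) := fun _ _ => rfl
      calc ∑ j ∈ Finset.range (J+1), PP f (j+1) a
          = ∑ j ∈ Finset.range (J+1), ∫⁻ x in Iic a,
              ENNReal.ofReal (f x) * PP f j (a - x) := rfl
        _ = ∫⁻ x in Iic a, ∑ j ∈ Finset.range (J+1),
              ENNReal.ofReal (f x) * PP f j (a - x) := by
            exact (lintegral_finset_sum' (Finset.range (J+1)) (fun j hj =>
              (((hf.ennreal_ofReal).mul
                ((PP_measurable hf j).comp
                  (measurable_const.sub measurable_id)))).aemeasurable)).symm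
        _ = ∫⁻ x in Iic a, ENNReal.ofReal (f x) *
              ∑ j ∈ Finset.range (J+1), PP f j (a - x) := by
            refine lintegral_congr fun x => ?_
            rw [Finset.mul_sum]
    have hcomb : (∫⁻ x in Iic a, ENNReal.ofReal (f x) *
          ∑ j ∈ Finset.range (J+1), PP f j (a - x)) +
        (∫⁻ x in Iic a, ENNReal.ofReal (f x) * cF f J (a - x)) =
        ∫⁻ x in Iic a, ENNReal.ofReal (f x) := by
      rw [← lintegral_add_left]
      · refine setLIntegral_congr_fun measurableSet_Iic (fun x _ => ?_)
        rw [← mul_add, ih (a - x), mul_one]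
      · refine (hf.ennreal_ofReal).mul ?_
        have hs : Measurable fun b : ℝ => ∑ j ∈ Finset.range (J+1), PP f j b :=
          Finset.measurable_sum _ (fun j _ => PP_measurable hf j)
        exact hs.comp (measurable_const.sub measurable_id)
    rw [hsum, cF_succ hf hneg J a, add_right_comm, hcomb]
    have hPP0 : PP f 0 a = tT f a := rfl
    rw [hPP0]
    exact cF_add_tT hl1 a

lemma tsum_PP_le (hf : Measurable f) (hneg : ∀ x < (0:ℝ), f x = 0)
    (hl1 : ∫⁻ x, ENNReal.ofReal (f x) = 1) (a : ℝ) : ∑' j, PP f j a ≤ 1 := by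
  refine Summable.tsum_le_of_sum_range_le ENNReal.summable fun n => ?_
  cases n with
  | zero => simp
  | succ J =>
    calc ∑ j ∈ Finset.range (J+1), PP f j a
        ≤ (∑ j ∈ Finset.range (J+1), PP f j a) + cF f J a := le_self_add
      _ = 1 := sumPP hf hneg hl1 J a
end Chunk3
section Chunk4
variable {f : ℝ → ℝ} {M : ℝ}

lemma GG_succ_le (h0 : ∀ x, 0 ≤ f x) (hneg : ∀ x < (0:ℝ), f x = 0) (hM : ∀ x, f x ≤ M)
    (m : ℕ) : GG f (m+1) ≤ ENNReal.ofReal (M^(m+1) / m.factorial) := by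
  have hsets : Iio (0:ℝ) ∪ Icc 0 1 = Iic 1 := by
    ext x
    simp only [mem_union, mem_Iio, mem_Icc, mem_Iic]
    constructor
    · rintro (h | ⟨h1, h2⟩) <;> linarith
    · intro h
      rcases lt_or_ge x 0 with h2 | h2
      · exact Or.inl h2
      · exact Or.inr ⟨h2, h⟩
  have hdisj : Disjoint (Iio (0:ℝ)) (Icc 0 1) := by
    rw [Set.disjoint_left]
    intro x hx hx2
    exact absurd hx2.1 (not_le.2 hx)
  calc GG f (m+1) = ∫⁻ x in Iic 1, eF f m x := rfl
    _ = ∫⁻ x in Iio 0 ∪ Icc 0 1, eF f m x := by rw [hsets]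
    _ = (∫⁻ x in Iio 0, eF f m x) + ∫⁻ x in Icc 0 1, eF f m x :=
        lintegral_union measurableSet_Icc hdisj
    _ = ∫⁻ x in Icc 0 1, eF f m x := by
        rw [setLIntegral_congr_fun measurableSet_Iio
          (fun x hx => eF_neg hneg m x hx)]
        simp
    _ ≤ ∫⁻ _x : ℝ in Icc (0:ℝ) 1, ENNReal.ofReal (M^(m+1) / m.factorial) := by
        refine setLIntegral_mono measurable_const fun x hx => ?_
        refine (eF_le h0 hneg hM m x).trans (ENNReal.ofReal_le_ofReal ?_)
        have h1 : max x 0 ≤ 1 := max_le hx.2 zero_le_one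
        have h2 : (max x 0)^m ≤ 1 := pow_le_one₀ (le_max_right x 0) h1
        have hM0 : (0:ℝ) ≤ M := (h0 0).trans (hM 0)
        have hfac : (0:ℝ) < m.factorial := by positivity
        rw [div_le_div_iff_of_pos_right hfac]
        calc M^(m+1) * (max x 0)^m ≤ M^(m+1) * 1 := by
              refine mul_le_mul_of_nonneg_left h2 (by positivity)
          _ = M^(m+1) := mul_one _
    _ = ENNReal.ofReal (M^(m+1) / m.factorial) := by
        rw [setLIntegral_const, Real.volume_Icc]
        norm_num

lemma SG_ne_top (h0 : ∀ x, 0 ≤ f x) (hneg : ∀ x < (0:ℝ), f x = 0) (hM : ∀ x, f x ≤ M) :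
    ∑' m, GG f m ≠ ⊤ := by
  have hM0 : (0:ℝ) ≤ M := (h0 0).trans (hM 0)
  have hsum : Summable (fun m : ℕ => M^(m+1) / m.factorial) := by
    refine Summable.congr ((Real.summable_pow_div_factorial M).mul_left M) fun m => ?_
    rw [pow_succ]; ring
  have hlt : ∑' m, GG f m < ⊤ := by
    calc ∑' m, GG f m = GG f 0 + ∑' m, GG f (m+1) := tsum_eq_zero_add' ENNReal.summable
      _ ≤ 1 + ∑' m, ENNReal.ofReal (M^(m+1)/m.factorial) := by
          refine add_le_add le_rfl (ENNReal.tsum_le_tsum fun m => GG_succ_le h0 hneg hM m)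
      _ = 1 + ENNReal.ofReal (∑' m, M^(m+1)/m.factorial) := by
          rw [ENNReal.ofReal_tsum_of_nonneg (fun m => by positivity) hsum]
      _ < ⊤ := by
          refine ENNReal.add_lt_top.2 ⟨ENNReal.one_lt_top, ENNReal.ofReal_lt_top⟩
  exact hlt.ne

lemma tsum_cauchy_le (a b : ℕ → ENNReal) :
    ∑' k, ∑ j ∈ Finset.range (k+1), a j * b (k - j) ≤ (∑' j, a j) * (∑' m, b m) := by
  refine Summable.tsum_le_of_sum_range_le ENNReal.summable fun N => ?_
  have h0 : ∀ k, ∑ j ∈ Finset.range (k+1), a j * b (k-j) =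
      ∑ ij ∈ Finset.HasAntidiagonal.antidiagonal k, a ij.1 * b ij.2 := fun k =>
    (Finset.Nat.sum_antidiagonal_eq_sum_range_succ_mk (fun ij => a ij.1 * b ij.2) k).symm
  have hdisj : (↑(Finset.range N) : Set ℕ).PairwiseDisjoint Finset.HasAntidiagonal.antidiagonal := by
    intro i _ j _ hij
    simp only [Function.onFun, Finset.disjoint_left]
    intro p hp hq
    rw [Finset.HasAntidiagonal.mem_antidiagonal] at hp hq
    exact hij (hp ▸ hq ▸ rfl)
  calc ∑ k ∈ Finset.range N, ∑ j ∈ Finset.range (k+1), a j * b (k-j)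
      = ∑ k ∈ Finset.range N, ∑ ij ∈ Finset.HasAntidiagonal.antidiagonal k, a ij.1 * b ij.2 := by
        refine Finset.sum_congr rfl fun k _ => h0 k
    _ = ∑ ij ∈ (Finset.range N).biUnion Finset.HasAntidiagonal.antidiagonal, a ij.1 * b ij.2 :=
        (Finset.sum_biUnion hdisj).symm
    _ ≤ ∑ ij ∈ Finset.range N ×ˢ Finset.range N, a ij.1 * b ij.2 := by
        refine Finset.sum_le_sum_of_subset fun p hp => ?_
        rw [Finset.mem_biUnion] at hp
        obtain ⟨k, hk, hpk⟩ := hp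
        rw [Finset.HasAntidiagonal.mem_antidiagonal] at hpk
        rw [Finset.mem_range] at hk
        rw [Finset.mem_product, Finset.mem_range, Finset.mem_range]
        omega
    _ = (∑ j ∈ Finset.range N, a j) * (∑ m ∈ Finset.range N, b m) := by
        rw [Finset.sum_product]
        exact (Finset.sum_mul_sum _ _ _ _).symm
    _ ≤ (∑' j, a j) * (∑' m, b m) :=
        mul_le_mul' (ENNReal.sum_le_tsum _) (ENNReal.sum_le_tsum _)

lemma delta_le (hf : Measurable f) (hneg : ∀ x < (0:ℝ), f x = 0) :
    ∀ k (a : ℝ), ∫⁻ x in Ioc a (a+1), eF f k x ≤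
      ∑ j ∈ Finset.range (k+1), PP f j a * GG f (k - j) := by
  intro k
  induction k with
  | zero =>
    intro a
    calc ∫⁻ x in Ioc a (a+1), eF f 0 x ≤ ∫⁻ x in Ioi a, eF f 0 x :=
        lintegral_mono_set Ioc_subset_Ioi_self
      _ = PP f 0 a * GG f 0 := by
          have hGG : GG f 0 = 1 := rfl
          rw [hGG, mul_one]; rfl
      _ = ∑ j ∈ Finset.range 1, PP f j a * GG f (0 - j) := by simp
  | succ k ih =>
    intro a
    have hmeas : Measurable (Function.uncurry
        (fun t s : ℝ => ENNReal.ofReal (f s) * eF f k (t - s))) :=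
      ((hf.comp measurable_snd).ennreal_ofReal).mul
        ((eF_measurable hf k).comp (measurable_fst.sub measurable_snd))
    have hswap : ∫⁻ x in Ioc a (a+1), eF f (k+1) x
        = ∫⁻ s, ENNReal.ofReal (f s) * ∫⁻ x in Ioc (a-s) ((a-s)+1), eF f k x := by
      calc ∫⁻ x in Ioc a (a+1), eF f (k+1) x
          = ∫⁻ x in Ioc a (a+1), ∫⁻ s, ENNReal.ofReal (f s) * eF f k (x - s) := rfl
        _ = ∫⁻ s, ∫⁻ x in Ioc a (a+1), ENNReal.ofReal (f s) * eF f k (x - s) :=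
            lintegral_lintegral_swap hmeas.aemeasurable
        _ = ∫⁻ s, ENNReal.ofReal (f s) * ∫⁻ x in Ioc a (a+1), eF f k (x - s) := by
            refine lintegral_congr fun s => ?_
            exact lintegral_const_mul _
              ((eF_measurable hf k).comp (measurable_id.sub measurable_const))
        _ = ∫⁻ s, ENNReal.ofReal (f s) * ∫⁻ x in Ioc (a-s) ((a-s)+1), eF f k x := by
            refine lintegral_congr fun s => ?_
            congr 1
            refine setLIntegral_shift (eF f k) s measurableSet_Ioc measurableSet_Ioc
              (fun y => by
                simp only [mem_Ioc]
                constructor <;> (intro h; constructor <;> linarith [h.1, h.2]))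
    have hD : Measurable (fun s : ℝ => ∫⁻ x in Ioc (a-s) ((a-s)+1), eF f k x) := by
      have h1 : (fun s : ℝ => ∫⁻ x in Ioc (a-s) ((a-s)+1), eF f k x) =
          (fun b : ℝ => ∫⁻ x in Ioc b (b+1), eF f k x) ∘ (fun s => a - s) := rfl
      rw [h1]
      refine Measurable.comp ?_ (measurable_const.sub measurable_id)
      -- measurability of b ↦ ∫⁻ in Ioc b (b+1)
      have h2 : (fun b : ℝ => ∫⁻ x in Ioc b (b+1), eF f k x) =
          fun b => ∫⁻ x, ({p : ℝ × ℝ | p.1 < p.2 ∧ p.2 ≤ p.1 + 1}.indicator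
            (fun p => eF f k p.2)) (b, x) := by
        funext b
        rw [← lintegral_indicator measurableSet_Ioc]
        refine lintegral_congr fun x => ?_
        by_cases h : x ∈ Ioc b (b+1)
        · rw [indicator_of_mem h, indicator_of_mem]
          exact ⟨h.1, h.2⟩
        · rw [indicator_of_notMem h, indicator_of_notMem]
          intro hc
          exact h ⟨hc.1, hc.2⟩
      rw [h2]
      refine Measurable.lintegral_prod_right' ?_
      refine Measurable.indicator ((eF_measurable hf k).comp measurable_snd) ?_
      exact MeasurableSet.inter (measurableSet_lt measurable_fst measurable_snd)
        (measurableSet_le measurable_snd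
          ((measurable_fst.add_const 1)))
    rw [hswap]
    have hsplit := lintegral_add_compl (μ := volume)
      (fun s => ENNReal.ofReal (f s) * ∫⁻ x in Ioc (a-s) ((a-s)+1), eF f k x)
      (measurableSet_Iic (a := a))
    rw [compl_Iic] at hsplit
    rw [← hsplit]
    -- bound the Ioi part
    have hIoi : ∫⁻ s in Ioi a, ENNReal.ofReal (f s) * ∫⁻ x in Ioc (a-s) ((a-s)+1), eF f k x
        ≤ PP f 0 a * GG f (k+1) := by
      have hb : ∀ s ∈ Ioi a, ENNReal.ofReal (f s) * ∫⁻ x in Ioc (a-s) ((a-s)+1), eF f k x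
          ≤ ENNReal.ofReal (f s) * GG f (k+1) := by
        intro s hs
        refine mul_le_mul' le_rfl ?_
        calc ∫⁻ x in Ioc (a-s) ((a-s)+1), eF f k x
            ≤ ∫⁻ x in Iic ((a-s)+1), eF f k x := lintegral_mono_set Ioc_subset_Iic_self
          _ ≤ ∫⁻ x in Iic 1, eF f k x := by
              refine lintegral_mono_set (Iic_subset_Iic.2 ?_)
              simp only [mem_Ioi] at hs
              linarith
          _ = GG f (k+1) := rfl
      calc ∫⁻ s in Ioi a, ENNReal.ofReal (f s) * ∫⁻ x in Ioc (a-s) ((a-s)+1), eF f k x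
          ≤ ∫⁻ s in Ioi a, ENNReal.ofReal (f s) * GG f (k+1) :=
            setLIntegral_mono (hf.ennreal_ofReal.mul measurable_const) hb
        _ = (∫⁻ s in Ioi a, ENNReal.ofReal (f s)) * GG f (k+1) :=
            lintegral_mul_const _ hf.ennreal_ofReal
        _ = PP f 0 a * GG f (k+1) := rfl
    -- bound the Iic part
    have hIic : ∫⁻ s in Iic a, ENNReal.ofReal (f s) * ∫⁻ x in Ioc (a-s) ((a-s)+1), eF f k x
        ≤ ∑ j ∈ Finset.range (k+1), PP f (j+1) a * GG f (k-j) := by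
      calc ∫⁻ s in Iic a, ENNReal.ofReal (f s) * ∫⁻ x in Ioc (a-s) ((a-s)+1), eF f k x
          ≤ ∫⁻ s in Iic a, ENNReal.ofReal (f s) *
              ∑ j ∈ Finset.range (k+1), PP f j (a-s) * GG f (k-j) := by
            refine setLIntegral_mono ?_ fun s _ => mul_le_mul' le_rfl (ih (a - s))
            refine (hf.ennreal_ofReal).mul ?_
            refine Finset.measurable_sum _ fun j _ => ?_
            exact ((PP_measurable hf j).comp (measurable_const.sub measurable_id)).mul
              measurable_const
        _ = ∑ j ∈ Finset.range (k+1), ∫⁻ s in Iic a,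
              (ENNReal.ofReal (f s) * PP f j (a-s)) * GG f (k-j) := by
            rw [← lintegral_finset_sum']
            · refine setLIntegral_congr_fun measurableSet_Iic
                (fun s _ => ?_)
              rw [Finset.mul_sum]
              refine Finset.sum_congr rfl fun j _ => ?_
              ring
            · intro j _
              exact (((hf.ennreal_ofReal).mul
                ((PP_measurable hf j).comp (measurable_const.sub measurable_id))).mul
                measurable_const).aemeasurable
        _ = ∑ j ∈ Finset.range (k+1), PP f (j+1) a * GG f (k-j) := by
            refine Finset.sum_congr rfl fun j _ => ?_
            have hm : Measurable fun s : ℝ => ENNReal.ofReal (f s) * PP f j (a - s) :=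
              (hf.ennreal_ofReal).mul
                ((PP_measurable hf j).comp (measurable_const.sub measurable_id))
            have h4 := lintegral_mul_const (μ := volume.restrict (Iic a)) (GG f (k-j)) hm
            calc ∫⁻ s in Iic a, ENNReal.ofReal (f s) * PP f j (a-s) * GG f (k-j)
                = (∫⁻ s in Iic a, ENNReal.ofReal (f s) * PP f j (a-s)) * GG f (k-j) := h4
              _ = PP f (j+1) a * GG f (k-j) := rfl
    calc (∫⁻ s in Iic a, ENNReal.ofReal (f s) * ∫⁻ x in Ioc (a-s) ((a-s)+1), eF f k x)
          + ∫⁻ s in Ioi a, ENNReal.ofReal (f s) * ∫⁻ x in Ioc (a-s) ((a-s)+1), eF f k x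
        ≤ (∑ j ∈ Finset.range (k+1), PP f (j+1) a * GG f (k-j)) + PP f 0 a * GG f (k+1) :=
          add_le_add hIic hIoi
      _ = ∑ j ∈ Finset.range (k+2), PP f j a * GG f (k+1-j) := by
          rw [Finset.sum_range_succ' (fun j => PP f j a * GG f (k+1-j)) (k+1)]
          simp only [Nat.succ_sub_succ, Nat.sub_zero]
      _ = ∑ j ∈ Finset.range (k+1+1), PP f j a * GG f (k+1-j) := rfl

lemma interval_bound (hf : Measurable f) (hneg : ∀ x < (0:ℝ), f x = 0)
    (hl1 : ∫⁻ x, ENNReal.ofReal (f x) = 1) (a : ℝ) :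
    ∑' k, ∫⁻ x in Ioc a (a+1), eF f k x ≤ ∑' m, GG f m := by
  calc ∑' k, ∫⁻ x in Ioc a (a+1), eF f k x
      ≤ ∑' k, ∑ j ∈ Finset.range (k+1), PP f j a * GG f (k-j) :=
        ENNReal.tsum_le_tsum fun k => delta_le hf hneg k a
    _ ≤ (∑' j, PP f j a) * (∑' m, GG f m) := tsum_cauchy_le _ _
    _ ≤ 1 * ∑' m, GG f m := mul_le_mul' (tsum_PP_le hf hneg hl1 a) le_rfl
    _ = ∑' m, GG f m := one_mul _

end Chunk4
section Chunk5
variable {f : ℝ → ℝ} {M β : ℝ}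

lemma tT_le_one (hl1 : ∫⁻ x, ENNReal.ofReal (f x) = 1) (a : ℝ) : tT f a ≤ 1 := by
  rw [← hl1]
  exact setLIntegral_le_lintegral _ _

lemma tT_lintegral (h0 : ∀ x, 0 ≤ f x) (hf : Measurable f)
    (hmeanI : Integrable (fun x => x * f x) (volume.restrict (Ioi 0)))
    (hβ : 0 < β) (hmean : ∫ x in Ioi (0:ℝ), x * f x = 1 / β) :
    ∫⁻ x in Ioi (0:ℝ), tT f x ≤ ENNReal.ofReal (1/β) := by
  have hmeas : Measurable (Function.uncurry
      (fun x y : ℝ => (Ioi x).indicator (fun y => ENNReal.ofReal (f y)) y)) := by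
    have h : Function.uncurry (fun x y : ℝ => (Ioi x).indicator
        (fun y => ENNReal.ofReal (f y)) y) =
        {p : ℝ × ℝ | p.1 < p.2}.indicator (fun p => ENNReal.ofReal (f p.2)) := by
      funext p
      by_cases h : p.1 < p.2
      · simp [Function.uncurry, Set.indicator_apply, h]
      · simp [Function.uncurry, Set.indicator_apply, h]
    rw [h]
    exact ((hf.comp measurable_snd).ennreal_ofReal).indicator
      (measurableSet_lt measurable_fst measurable_snd)
  have step1 : ∫⁻ x in Ioi (0:ℝ), tT f x = ∫⁻ y, ENNReal.ofReal (f y) * ENNReal.ofReal y := by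
    calc ∫⁻ x in Ioi (0:ℝ), tT f x
        = ∫⁻ x in Ioi (0:ℝ), ∫⁻ y, (Ioi x).indicator (fun y => ENNReal.ofReal (f y)) y := by
          refine setLIntegral_congr_fun measurableSet_Ioi
            (fun x _ => ?_)
          rw [tT, lintegral_indicator measurableSet_Ioi]
      _ = ∫⁻ y, ∫⁻ x in Ioi (0:ℝ), (Ioi x).indicator (fun y => ENNReal.ofReal (f y)) y :=
          lintegral_lintegral_swap hmeas.aemeasurable
      _ = ∫⁻ y, ENNReal.ofReal (f y) * ENNReal.ofReal y := by
          refine lintegral_congr fun y => ?_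
          have h2 : ∀ x : ℝ, (Ioi x).indicator (fun y => ENNReal.ofReal (f y)) y =
              (Iio y).indicator (fun _ => ENNReal.ofReal (f y)) x := by
            intro x
            by_cases h : x < y
            · simp [Set.indicator_apply, h]
            · simp [Set.indicator_apply, h]
          rw [lintegral_congr h2, lintegral_indicator measurableSet_Iio,
            setLIntegral_const, Measure.restrict_apply measurableSet_Iio]
          have h3 : Iio y ∩ Ioi 0 = Ioo 0 y := by
            ext z; simp only [mem_inter_iff, mem_Iio, mem_Ioi, mem_Ioo]; tauto
          rw [h3, Real.volume_Ioo, sub_zero]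
  rw [step1]
  have step2 : ∫⁻ y, ENNReal.ofReal (f y) * ENNReal.ofReal y
      = ∫⁻ y in Ioi (0:ℝ), ENNReal.ofReal (y * f y) := by
    have hsplit := lintegral_add_compl (μ := volume)
      (fun y => ENNReal.ofReal (f y) * ENNReal.ofReal y) (measurableSet_Ioi (a := (0:ℝ)))
    rw [compl_Ioi] at hsplit
    have hzero : ∫⁻ y in Iic (0:ℝ), ENNReal.ofReal (f y) * ENNReal.ofReal y = 0 := by
      rw [setLIntegral_congr_fun measurableSet_Iic (fun y hy => by
        rw [ENNReal.ofReal_of_nonpos hy, mul_zero])]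
      simp
    rw [← hsplit, hzero, add_zero]
    refine setLIntegral_congr_fun measurableSet_Ioi (fun y hy => ?_)
    rw [ENNReal.ofReal_mul (le_of_lt hy)]
    ring
  rw [step2, ← hmean]
  rw [ofReal_integral_eq_lintegral_ofReal hmeanI]
  refine (ae_restrict_iff' measurableSet_Ioi).2 (Eventually.of_forall fun y hy =>
    mul_nonneg (le_of_lt hy) (h0 y))

lemma tsum_tT_ne_top (hf : Measurable f) (h0 : ∀ x, 0 ≤ f x)
    (hl1 : ∫⁻ x, ENNReal.ofReal (f x) = 1)
    (hmeanI : Integrable (fun x => x * f x) (volume.restrict (Ioi 0)))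
    (hβ : 0 < β) (hmean : ∫ x in Ioi (0:ℝ), x * f x = 1 / β) :
    ∑' n : ℕ, tT f ((n:ℝ)/2) ≠ ⊤ := by
  have key : ∀ n : ℕ, tT f (((n:ℝ)+1)/2) * ENNReal.ofReal (1/2)
      ≤ ∫⁻ x in Ioc ((n:ℝ)/2) (((n:ℝ)+1)/2), tT f x := by
    intro n
    calc tT f (((n:ℝ)+1)/2) * ENNReal.ofReal (1/2)
        = ∫⁻ _x : ℝ in Ioc ((n:ℝ)/2) (((n:ℝ)+1)/2), tT f (((n:ℝ)+1)/2) := by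
          rw [setLIntegral_const, Real.volume_Ioc]
          congr 1
          ring_nf
      _ ≤ ∫⁻ x in Ioc ((n:ℝ)/2) (((n:ℝ)+1)/2), tT f x := by
          refine setLIntegral_mono (tT_measurable hf) fun x hx => ?_
          exact tT_anti hx.2
  have hdisj : Pairwise (Function.onFun Disjoint
      (fun n : ℕ => Ioc ((n:ℝ)/2) (((n:ℝ)+1)/2))) := by
    intro i j hij
    simp only [Function.onFun]
    refine Set.Ioc_disjoint_Ioc.2 ?_
    rcases lt_or_gt_of_ne hij with h | h
    · have hij2 : (i:ℝ) + 1 ≤ (j:ℝ) := by exact_mod_cast h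
      refine le_trans (min_le_left _ _) (le_trans ?_ (le_max_right _ _))
      linarith
    · have hij2 : (j:ℝ) + 1 ≤ (i:ℝ) := by exact_mod_cast h
      refine le_trans (min_le_right _ _) (le_trans ?_ (le_max_left _ _))
      linarith
  have hsum : ∑' n : ℕ, (tT f (((n:ℝ)+1)/2) * ENNReal.ofReal (1/2))
      ≤ ENNReal.ofReal (1/β) := by
    calc ∑' n : ℕ, (tT f (((n:ℝ)+1)/2) * ENNReal.ofReal (1/2))
        ≤ ∑' n : ℕ, ∫⁻ x in Ioc ((n:ℝ)/2) (((n:ℝ)+1)/2), tT f x :=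
          ENNReal.tsum_le_tsum key
      _ = ∫⁻ x in ⋃ n : ℕ, Ioc ((n:ℝ)/2) (((n:ℝ)+1)/2), tT f x :=
          (lintegral_iUnion (fun n => measurableSet_Ioc) hdisj _).symm
      _ ≤ ∫⁻ x in Ioi (0:ℝ), tT f x := by
          refine lintegral_mono_set (iUnion_subset fun n => ?_)
          intro x hx
          have hn : (0:ℝ) ≤ (n:ℝ)/2 := by positivity
          exact lt_of_le_of_lt hn hx.1
      _ ≤ ENNReal.ofReal (1/β) := tT_lintegral h0 hf hmeanI hβ hmean
  have half : (ENNReal.ofReal (1/2) : ENNReal) * 2 = 1 := by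
    rw [ENNReal.ofReal_div_of_pos (by norm_num)]
    norm_num
    rw [ENNReal.inv_mul_cancel] <;> norm_num
  have h2 : ∑' n : ℕ, tT f (((n:ℝ)+1)/2) ≤ ENNReal.ofReal (1/β) * 2 := by
    calc ∑' n : ℕ, tT f (((n:ℝ)+1)/2)
        = (∑' n : ℕ, tT f (((n:ℝ)+1)/2) * ENNReal.ofReal (1/2)) * 2 := by
          rw [ENNReal.tsum_mul_right, mul_assoc, half, mul_one]
      _ ≤ ENNReal.ofReal (1/β) * 2 := mul_le_mul' hsum le_rfl
  have hfin : ∑' n : ℕ, tT f ((n:ℝ)/2) = tT f 0 + ∑' n : ℕ, tT f (((n:ℝ)+1)/2) := by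
    rw [tsum_eq_zero_add' ENNReal.summable]
    norm_num
  rw [hfin]
  refine ENNReal.add_ne_top.2 ⟨?_, ?_⟩
  · exact ((tT_le_one hl1 0).trans_lt ENNReal.one_lt_top).ne
  · exact (h2.trans_lt (by
      refine ENNReal.mul_lt_top ENNReal.ofReal_lt_top ?_
      norm_num)).ne

lemma eF1_le (hf : Measurable f) (h0 : ∀ x, 0 ≤ f x) (hM : ∀ x, f x ≤ M) (t : ℝ) :
    eF f 1 t ≤ ENNReal.ofReal (2*M) * tT f (t/2) := by
  have hM0 : (0:ℝ) ≤ M := (h0 0).trans (hM 0)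
  have hrefl : ∫⁻ s in Iic (t/2), ENNReal.ofReal (f (t - s)) = tT f (t/2) := by
    have h1 : ∀ s : ℝ, (Iic (t/2)).indicator (fun s => ENNReal.ofReal (f (t - s))) s =
        ((Ici (t/2)).indicator (fun y => ENNReal.ofReal (f y))) (t - s) := by
      intro s
      by_cases h : s ≤ t/2
      · have h2 : t/2 ≤ t - s := by linarith
        simp [Set.indicator_apply, h, h2]
      · have h2 : ¬ (t/2 ≤ t - s) := by intro hc; apply h; linarith
        simp [Set.indicator_apply, h, h2]
    calc ∫⁻ s in Iic (t/2), ENNReal.ofReal (f (t - s))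
        = ∫⁻ s, ((Ici (t/2)).indicator (fun y => ENNReal.ofReal (f y))) (t - s) := by
          rw [← lintegral_indicator measurableSet_Iic]
          exact lintegral_congr h1
      _ = ∫⁻ y, ((Ici (t/2)).indicator (fun y => ENNReal.ofReal (f y))) y :=
          (Measure.measurePreserving_sub_left volume t).lintegral_comp
            ((hf.ennreal_ofReal).indicator measurableSet_Ici)
      _ = ∫⁻ y in Ici (t/2), ENNReal.ofReal (f y) := lintegral_indicator measurableSet_Ici _
      _ = tT f (t/2) := (setLIntegral_congr (Ioi_ae_eq_Ici (μ := volume) (a := t/2))).symm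
  have hsplit := lintegral_add_compl (μ := volume)
    (fun s => ENNReal.ofReal (f s) * ENNReal.ofReal (f (t - s)))
    (measurableSet_Iic (a := t/2))
  rw [compl_Iic] at hsplit
  have heq : eF f 1 t = ∫⁻ s, ENNReal.ofReal (f s) * ENNReal.ofReal (f (t - s)) := rfl
  rw [heq, ← hsplit]
  have hIic : ∫⁻ s in Iic (t/2), ENNReal.ofReal (f s) * ENNReal.ofReal (f (t - s))
      ≤ ENNReal.ofReal M * tT f (t/2) := by
    calc ∫⁻ s in Iic (t/2), ENNReal.ofReal (f s) * ENNReal.ofReal (f (t - s))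
        ≤ ∫⁻ s in Iic (t/2), ENNReal.ofReal M * ENNReal.ofReal (f (t - s)) := by
          refine setLIntegral_mono (measurable_const.mul
            ((hf.comp (measurable_const.sub measurable_id)).ennreal_ofReal)) fun s _ =>
            mul_le_mul' (ENNReal.ofReal_le_ofReal (hM s)) le_rfl
      _ = ENNReal.ofReal M * ∫⁻ s in Iic (t/2), ENNReal.ofReal (f (t - s)) :=
          lintegral_const_mul _ ((hf.comp (measurable_const.sub measurable_id)).ennreal_ofReal)
      _ = ENNReal.ofReal M * tT f (t/2) := by rw [hrefl]
  have hIoi : ∫⁻ s in Ioi (t/2), ENNReal.ofReal (f s) * ENNReal.ofReal (f (t - s))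
      ≤ tT f (t/2) * ENNReal.ofReal M := by
    calc ∫⁻ s in Ioi (t/2), ENNReal.ofReal (f s) * ENNReal.ofReal (f (t - s))
        ≤ ∫⁻ s in Ioi (t/2), ENNReal.ofReal (f s) * ENNReal.ofReal M := by
          refine setLIntegral_mono ((hf.ennreal_ofReal).mul measurable_const) fun s _ =>
            mul_le_mul' le_rfl (ENNReal.ofReal_le_ofReal (hM _))
      _ = (∫⁻ s in Ioi (t/2), ENNReal.ofReal (f s)) * ENNReal.ofReal M :=
          lintegral_mul_const _ hf.ennreal_ofReal
      _ = tT f (t/2) * ENNReal.ofReal M := rfl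
  calc (∫⁻ s in Iic (t/2), ENNReal.ofReal (f s) * ENNReal.ofReal (f (t - s)))
        + ∫⁻ s in Ioi (t/2), ENNReal.ofReal (f s) * ENNReal.ofReal (f (t - s))
      ≤ ENNReal.ofReal M * tT f (t/2) + tT f (t/2) * ENNReal.ofReal M :=
        add_le_add hIic hIoi
    _ = ENNReal.ofReal (2*M) * tT f (t/2) := by
        rw [mul_comm (tT f (t/2)) (ENNReal.ofReal M), ← two_mul]
        rw [ENNReal.ofReal_mul (by norm_num : (0:ℝ) ≤ 2)]
        rw [mul_assoc]
        congr 1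
        simp [ENNReal.ofReal_ofNat]

end Chunk5
section Chunk6
variable {f : ℝ → ℝ} {M : ℝ}

lemma R_le (hf : Measurable f) (h0 : ∀ x, 0 ≤ f x) (hneg : ∀ x < (0:ℝ), f x = 0)
    (hM : ∀ x, f x ≤ M) (hl1 : ∫⁻ x, ENNReal.ofReal (f x) = 1) (t : ℝ) :
    ∑' k, eF f k t ≤ ENNReal.ofReal M + (ENNReal.ofReal (2*M)
      + ENNReal.ofReal (2*M) * ((∑' m, GG f m) * ∑' n : ℕ, tT f ((n:ℝ)/2))) := by
  have hR : ∑' k, eF f (k+2) t = ∫⁻ s, (∑' k, eF f k s) * eF f 1 (t - s) := by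
    calc ∑' k, eF f (k+2) t = ∑' k, ∫⁻ s, eF f k s * eF f 1 (t - s) :=
          tsum_congr fun k => convF hf k 1 t
      _ = ∫⁻ s, ∑' k, eF f k s * eF f 1 (t - s) := (lintegral_tsum fun k =>
          ((eF_measurable hf k).mul ((eF_measurable hf 1).comp
            (measurable_const.sub measurable_id))).aemeasurable).symm
      _ = ∫⁻ s, (∑' k, eF f k s) * eF f 1 (t - s) := lintegral_congr fun s =>
          ENNReal.tsum_mul_right
  set R : ℝ → ENNReal := fun s => ∑' k, eF f k s with hRdef
  have hRmeas : Measurable R := Measurable.ennreal_tsum fun k => eF_measurable hf k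
  have hsplit := lintegral_add_compl (μ := volume) (fun s => R s * eF f 1 (t - s))
      (measurableSet_Iic (a := t))
  rw [compl_Iic] at hsplit
  have hIoi0 : ∫⁻ s in Ioi t, R s * eF f 1 (t - s) = 0 := by
    rw [setLIntegral_congr_fun measurableSet_Ioi (fun s hs => by
      rw [eF_neg hneg 1 _ (by simp only [mem_Ioi] at hs; linarith), mul_zero])]
    simp
  have hcover : Iic t = ⋃ n : ℕ, Ioc (t - ((n:ℝ)+1)) (t - ((n:ℝ)+1) + 1) := by
    ext x
    simp only [mem_Iic, mem_iUnion, mem_Ioc]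
    constructor
    · intro hx
      refine ⟨⌊t - x⌋₊, ?_, ?_⟩
      · have := Nat.lt_floor_add_one (t - x); linarith
      · have := Nat.floor_le (by linarith : (0:ℝ) ≤ t - x); linarith
    · rintro ⟨n, h1, h2⟩
      have : (0:ℝ) ≤ (n:ℝ) := n.cast_nonneg
      linarith
  have hdisj : Pairwise (Function.onFun Disjoint
      (fun n : ℕ => Ioc (t - ((n:ℝ)+1)) (t - ((n:ℝ)+1) + 1))) := by
    intro i j hij
    refine Set.Ioc_disjoint_Ioc.2 ?_
    rcases lt_or_gt_of_ne hij with h | h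
    · have hij2 : (i:ℝ) + 1 ≤ (j:ℝ) := by exact_mod_cast h
      refine le_trans (min_le_right _ _) (le_trans ?_ (le_max_left _ _))
      linarith
    · have hij2 : (j:ℝ) + 1 ≤ (i:ℝ) := by exact_mod_cast h
      refine le_trans (min_le_left _ _) (le_trans ?_ (le_max_right _ _))
      linarith
  have hper : ∀ n : ℕ, ∫⁻ s in Ioc (t - ((n:ℝ)+1)) (t - ((n:ℝ)+1) + 1), R s * eF f 1 (t - s)
      ≤ (∑' m, GG f m) * (ENNReal.ofReal (2*M) * tT f ((n:ℝ)/2)) := by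
    intro n
    have hb : ∀ s ∈ Ioc (t - ((n:ℝ)+1)) (t - ((n:ℝ)+1) + 1),
        R s * eF f 1 (t - s) ≤ R s * (ENNReal.ofReal (2*M) * tT f ((n:ℝ)/2)) := by
      intro s hs
      refine mul_le_mul' le_rfl ?_
      refine (eF1_le hf h0 hM (t - s)).trans (mul_le_mul' le_rfl ?_)
      refine tT_anti ?_
      have h6 := hs.2
      linarith
    calc ∫⁻ s in Ioc (t - ((n:ℝ)+1)) (t - ((n:ℝ)+1) + 1), R s * eF f 1 (t - s)
        ≤ ∫⁻ s in Ioc (t - ((n:ℝ)+1)) (t - ((n:ℝ)+1) + 1),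
            R s * (ENNReal.ofReal (2*M) * tT f ((n:ℝ)/2)) :=
          setLIntegral_mono (hRmeas.mul measurable_const) hb
      _ = (∫⁻ s in Ioc (t - ((n:ℝ)+1)) (t - ((n:ℝ)+1) + 1), R s)
            * (ENNReal.ofReal (2*M) * tT f ((n:ℝ)/2)) := lintegral_mul_const _ hRmeas
      _ ≤ (∑' m, GG f m) * (ENNReal.ofReal (2*M) * tT f ((n:ℝ)/2)) := by
          refine mul_le_mul' ?_ le_rfl
          have hbnd := interval_bound hf hneg hl1 (t - ((n:ℝ)+1))
          have heq : ∫⁻ s in Ioc (t - ((n:ℝ)+1)) (t - ((n:ℝ)+1) + 1), R s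
              = ∑' k, ∫⁻ s in Ioc (t - ((n:ℝ)+1)) (t - ((n:ℝ)+1) + 1), eF f k s :=
            lintegral_tsum fun k => (eF_measurable hf k).aemeasurable
          rw [heq]
          exact hbnd
  have htail : ∑' k, eF f (k+2) t ≤ ENNReal.ofReal (2*M)
      * ((∑' m, GG f m) * ∑' n : ℕ, tT f ((n:ℝ)/2)) := by
    calc ∑' k, eF f (k+2) t = ∫⁻ s, R s * eF f 1 (t - s) := hR
      _ = (∫⁻ s in Iic t, R s * eF f 1 (t - s)) + ∫⁻ s in Ioi t, R s * eF f 1 (t - s) :=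
          hsplit.symm
      _ = ∫⁻ s in Iic t, R s * eF f 1 (t - s) := by rw [hIoi0, add_zero]
      _ = ∑' n : ℕ, ∫⁻ s in Ioc (t - ((n:ℝ)+1)) (t - ((n:ℝ)+1) + 1), R s * eF f 1 (t - s) := by
          rw [hcover]
          exact lintegral_iUnion (fun n => measurableSet_Ioc) hdisj _
      _ ≤ ∑' n : ℕ, (∑' m, GG f m) * (ENNReal.ofReal (2*M) * tT f ((n:ℝ)/2)) :=
          ENNReal.tsum_le_tsum hper
      _ = ENNReal.ofReal (2*M) * ((∑' m, GG f m) * ∑' n : ℕ, tT f ((n:ℝ)/2)) := by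
          rw [ENNReal.tsum_mul_left, ENNReal.tsum_mul_left]
          ring
  have hsplit2 : ∑' k, eF f k t = eF f 0 t + (eF f 1 t + ∑' k, eF f (k+2) t) := by
    rw [tsum_eq_zero_add' ENNReal.summable]
    congr 1
    rw [tsum_eq_zero_add' ENNReal.summable]
  rw [hsplit2]
  have h0' : eF f 0 t ≤ ENNReal.ofReal M := ENNReal.ofReal_le_ofReal (hM t)
  have h1' : eF f 1 t ≤ ENNReal.ofReal (2*M) := by
    refine (eF1_le hf h0 hM t).trans ?_
    calc ENNReal.ofReal (2*M) * tT f (t/2) ≤ ENNReal.ofReal (2*M) * 1 :=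
        mul_le_mul' le_rfl (tT_le_one hl1 _)
      _ = ENNReal.ofReal (2*M) := mul_one _
  exact add_le_add h0' (add_le_add h1' htail)

end Chunk6
section Chunk7
variable {f : ℝ → ℝ} {M : ℝ}

lemma f_contAt (hneg : ∀ x < (0:ℝ), f x = 0) (hcont : ContinuousOn f (Ici 0)) :
    ∀ x : ℝ, x ≠ 0 → ContinuousAt f x := by
  intro x hx
  rcases lt_or_gt_of_ne hx with h | h
  · have he : f =ᶠ[nhds x] (fun _ => (0:ℝ)) :=
      Filter.eventuallyEq_of_mem (isOpen_Iio.mem_nhds h) fun y hy => hneg y hy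
    exact ContinuousAt.congr (continuousAt_const (y := (0:ℝ))) he.symm
  · exact (hcont x (le_of_lt h)).continuousAt
      (mem_of_superset (isOpen_Ioi.mem_nhds h) Ioi_subset_Ici_self)

lemma conv_cont (hfi : Integrable f volume) (hf : Measurable f) (h0 : ∀ x, 0 ≤ f x)
    (hneg : ∀ x < (0:ℝ), f x = 0)
    {g : ℝ → ℝ} (hg : Measurable g) (hgnn : ∀ u, 0 ≤ g u)
    (hgb : ∀ T : ℝ, ∃ C : ℝ, ∀ u ≤ T, g u ≤ C)
    (hgc : ∀ x : ℝ, x ≠ 0 → ContinuousAt g x) :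
    Continuous fun t => ∫ s : ℝ, f s * g (t - s) := by
  rw [continuous_iff_continuousAt]
  intro t₀
  obtain ⟨C, hC⟩ := hgb (t₀ + 1)
  have hae : ∀ᵐ s : ℝ, s ≠ t₀ := by
    rw [ae_iff]
    have h : {s : ℝ | ¬ s ≠ t₀} = {t₀} := by ext s; simp
    rw [h]
    exact measure_singleton t₀
  refine tendsto_integral_filter_of_dominated_convergence (fun s => C * f s)
    (Eventually.of_forall fun t => ?_) ?_ (hfi.const_mul C) ?_
  · exact (hf.mul (hg.comp (measurable_const.sub measurable_id))).aestronglyMeasurable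
  · refine Filter.eventually_of_mem (Iio_mem_nhds (lt_add_one t₀)) fun t ht => ?_
    refine Eventually.of_forall fun s => ?_
    rw [Real.norm_eq_abs, abs_of_nonneg (mul_nonneg (h0 s) (hgnn _))]
    rcases lt_or_ge s 0 with hs | hs
    · simp [hneg s hs]
    · have h1 : t - s ≤ t₀ + 1 := by
        simp only [mem_Iio] at ht
        linarith
      calc f s * g (t - s) ≤ f s * C := mul_le_mul_of_nonneg_left (hC _ h1) (h0 s)
        _ = C * f s := mul_comm _ _
  · refine hae.mono fun s hs => ?_
    have h1 : ContinuousAt (fun t => f s * g (t - s)) t₀ := by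
      refine continuousAt_const.mul ?_
      exact ContinuousAt.comp (hgc (t₀ - s) (sub_ne_zero.2 (Ne.symm hs)))
        ((continuous_sub_right s).continuousAt)
    exact h1

lemma convPow_cont (hfi : Integrable f volume) (hf : Measurable f) (h0 : ∀ x, 0 ≤ f x)
    (hneg : ∀ x < (0:ℝ), f x = 0) (hcont : ContinuousOn f (Ici 0)) (hM : ∀ x, f x ≤ M) :
    ∀ k, Continuous (convPow f (k+1)) := by
  have hM0 : (0:ℝ) ≤ M := (h0 0).trans (hM 0)
  intro k
  induction k with
  | zero =>
    exact conv_cont hfi hf h0 hneg hf h0 (fun T => ⟨M, fun u _ => hM u⟩)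
      (f_contAt hneg hcont)
  | succ k ih =>
    refine conv_cont hfi hf h0 hneg ?_ ?_ ?_ ?_
    · have h : convPow f (k+1) = fun u => (eF f (k+1) u).toReal :=
        funext (convPow_eq hf h0 hneg hM (k+1))
      rw [h]
      exact (eF_measurable hf (k+1)).ennreal_toReal
    · exact convPow_nonneg hf h0 hneg hM (k+1)
    · intro T
      refine ⟨M^(k+2) * (max T 0)^(k+1) / ((k+1).factorial), fun u hu => ?_⟩
      refine (convPow_le hf h0 hneg hM (k+1) u).trans ?_
      have h1 : max u 0 ≤ max T 0 := max_le_max hu le_rfl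
      gcongr
    · exact fun x _ => ih.continuousAt

lemma tail_cont (hfi : Integrable f volume) (hf : Measurable f) (h0 : ∀ x, 0 ≤ f x)
    (hneg : ∀ x < (0:ℝ), f x = 0) (hcont : ContinuousOn f (Ici 0)) (hM : ∀ x, f x ≤ M) :
    Continuous fun t => ∑' k, convPow f (k+1) t := by
  have hM0 : (0:ℝ) ≤ M := (h0 0).trans (hM 0)
  rw [continuous_iff_continuousAt]
  intro t₀
  set T : ℝ := max (t₀ + 1) 1 with hT
  have hT1 : (1:ℝ) ≤ T := le_max_right _ _
  have hT0 : (0:ℝ) ≤ T := by linarith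
  have hsumm : Summable fun k : ℕ => M^(k+2) * T^(k+1) / ((k+1).factorial) := by
    have h1 : Summable fun k : ℕ => (M*T)^(k+1) / ((k+1).factorial) :=
      ((Real.summable_pow_div_factorial (M*T)).comp_injective (add_left_injective 1))
    refine Summable.congr (h1.mul_left M) fun k => ?_
    rw [mul_pow]
    ring
  have hco : ContinuousOn (fun t => ∑' k, convPow f (k+1) t) (Iio T) := by
    refine continuousOn_tsum (fun k => (convPow_cont hfi hf h0 hneg hcont hM k).continuousOn)
      hsumm fun k x hx => ?_
    rw [Real.norm_eq_abs, abs_of_nonneg (convPow_nonneg hf h0 hneg hM (k+1) x)]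
    refine (convPow_le hf h0 hneg hM (k+1) x).trans ?_
    have h1 : max x 0 ≤ T := max_le (le_of_lt hx) hT0
    gcongr
  refine hco.continuousAt (isOpen_Iio.mem_nhds ?_)
  calc t₀ < t₀ + 1 := lt_add_one t₀
    _ ≤ T := le_max_left _ _

end Chunk7
end Stmt17Aux

open Stmt17Aux in
/-- **The renewal density is well-defined, bounded and continuous.**
If `f` is a bounded, continuous probability density on `[0,∞)` with finite mean
`1/β > 0`, then the renewal density `r(t) = ∑_{k=1}^∞ f^{*k}(t)` is well-defined
(the series converges), bounded, and continuous on `[0,∞)`. -/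
theorem stmt17 (f : ℝ → ℝ) (hf : Measurable f) (h0 : ∀ x, 0 ≤ f x)
    (hneg : ∀ x < (0 : ℝ), f x = 0) (hcont : ContinuousOn f (Set.Ici 0))
    (M : ℝ) (hM : ∀ x, f x ≤ M)
    (hprob : ∫ x, f x = 1)
    (β : ℝ) (hβ : 0 < β) (hmean : ∫ x in Set.Ioi (0 : ℝ), x * f x = 1 / β) :
    (∀ t : ℝ, 0 ≤ t → Summable (fun k : ℕ => convPow f k t)) ∧
    (∃ M' : ℝ, ∀ t : ℝ, 0 ≤ t → ∑' k : ℕ, convPow f k t ≤ M') ∧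
    ContinuousOn (fun t => ∑' k : ℕ, convPow f k t) (Set.Ici 0) := by
  have hfi : Integrable f volume := by
    by_contra h
    rw [integral_undef h] at hprob
    norm_num at hprob
  have hl1 : ∫⁻ x, ENNReal.ofReal (f x) = 1 := by
    rw [← ofReal_integral_eq_lintegral_ofReal hfi (Filter.Eventually.of_forall h0), hprob,
      ENNReal.ofReal_one]
  have hmeanI : Integrable (fun x => x * f x) (volume.restrict (Set.Ioi 0)) := by
    by_contra h
    rw [integral_undef h] at hmean
    have hpos : (0:ℝ) < 1/β := by positivity
    linarith
  set Kv : ENNReal := ENNReal.ofReal M + (ENNReal.ofReal (2*M)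
      + ENNReal.ofReal (2*M) * ((∑' m, GG f m) * ∑' n : ℕ, tT f ((n:ℝ)/2))) with hKv
  have hKfin : Kv ≠ ⊤ := by
    refine ENNReal.add_ne_top.2 ⟨ENNReal.ofReal_ne_top, ENNReal.add_ne_top.2
      ⟨ENNReal.ofReal_ne_top, ENNReal.mul_ne_top ENNReal.ofReal_ne_top
        (ENNReal.mul_ne_top (SG_ne_top h0 hneg hM)
          (tsum_tT_ne_top hf h0 hl1 hmeanI hβ hmean))⟩⟩
  have hRle : ∀ t : ℝ, ∑' k, eF f k t ≤ Kv := fun t => R_le hf h0 hneg hM hl1 t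
  have hRfin : ∀ t : ℝ, ∑' k, eF f k t ≠ ⊤ := fun t =>
    ((hRle t).trans_lt (lt_top_iff_ne_top.2 hKfin)).ne
  have hcp : ∀ k (t : ℝ), convPow f k t = (eF f k t).toReal := convPow_eq hf h0 hneg hM
  have hsummable : ∀ t : ℝ, Summable fun k : ℕ => convPow f k t := by
    intro t
    have h1 : (fun k : ℕ => convPow f k t) = fun k => (eF f k t).toReal :=
      funext fun k => hcp k t
    rw [h1]
    exact ENNReal.summable_toReal (hRfin t)
  refine ⟨fun t _ => hsummable t, ⟨Kv.toReal, fun t _ => ?_⟩, ?_⟩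
  · have h1 : ∑' k : ℕ, convPow f k t = (∑' k, eF f k t).toReal := by
      rw [ENNReal.tsum_toReal_eq (fun k => eF_ne_top h0 hneg hM k t)]
      exact tsum_congr fun k => hcp k t
    rw [h1]
    exact ENNReal.toReal_mono hKfin (hRle t)
  · have h2 : (fun t => ∑' k : ℕ, convPow f k t) =
        fun t => f t + ∑' k, convPow f (k+1) t := by
      funext t
      rw [Summable.tsum_eq_zero_add (hsummable t)]
      rfl
    rw [h2]
    exact ContinuousOn.add hcont (tail_cont hfi hf h0 hneg hcont hM).continuousOn

end
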